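/- arXiv:2101.01512 — 3 statements merged into one kernel-verified Lean document; each statement's English description precedes it below -/
import Mathlib

section
/- Let k be a positive even integer. Then the number of integer solutions of x² + 3y² = k is divisible by 6, i.e. 6 divides |U_k|. -/
/-- `U k` is the set of integer solutions of `x² + 3y² = k`. -/
def U (k : ℤ) : Set (ℤ × ℤ) := {p | p.1 ^ 2 + 3 * p.2 ^ 2 = k}

/-!
Read `(x, y)` as `x + y√-3`. For even `k` every solution has `x ≡ y (mod 2)`, so multiplying by
the cube root of unity `(-1 + √-3) / 2` keeps it integral; this gives a map of order 3 on `U k`,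
and negation one of order 2. For `k ≠ 0` neither has a fixed point, so by counting fixed points
of a `p`-group action both 2 and 3 divide `|U k|`.
-/

open Function Set

theorem prime_dvd_card_of_iterate_eq_id {α : Type*} [Finite α] {p : ℕ} [Fact p.Prime]
    {f : α → α} (hf : f^[p] = id) (hfree : ∀ x, ¬IsFixedPt f x) : p ∣ Nat.card α := by
  classical
  have := Fintype.ofFinite α
  have hmod := Equiv.Perm.card_fixedPoints_modEq (f := (f : Function.End α)) (n := 1)
    (by rw [pow_one]; exact hf)
  have : fixedPoints f = ∅ := eq_empty_of_forall_notMem hfree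
  simp_all [Nat.card_eq_fintype_card, Nat.modEq_zero_iff_dvd]

theorem Set.MapsTo.prime_dvd_ncard {α : Type*} {s : Set α} (hs : s.Finite) {p : ℕ}
    [Fact p.Prime] {f : α → α} (hmaps : MapsTo f s s) (hperiod : ∀ x ∈ s, f^[p] x = x)
    (hfree : ∀ x ∈ s, ¬IsFixedPt f x) : p ∣ s.ncard := by
  have := hs.to_subtype
  refine prime_dvd_card_of_iterate_eq_id (f := hmaps.restrict f s s) ?_ fun x hx => ?_
  · ext1 x
    rw [hmaps.iterate_restrict]
    exact Subtype.ext (hperiod x x.2)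
  · exact hfree x x.2 (congrArg Subtype.val hx)

/-- Multiplication of `x + y√-3` by `(-1 + √-3) / 2`; the divisions are exact only when
`x ≡ y (mod 2)`. -/
def rotate (q : ℤ × ℤ) : ℤ × ℤ := ((-q.1 - 3 * q.2) / 2, (q.1 - q.2) / 2)

theorem U_finite (k : ℤ) : (U k).Finite := by
  refine ((finite_Icc (-k) k).prod (finite_Icc (-k) k)).subset fun q (hq : _ = k) => ?_
  constructor <;> constructor <;>
    nlinarith [sq_nonneg (q.1 - 1), sq_nonneg (q.1 + 1), sq_nonneg (q.2 - 1), sq_nonneg (q.2 + 1)]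

theorem zero_notMem_U {k : ℤ} (hk : k ≠ 0) : (0 : ℤ × ℤ) ∉ U k := by
  simpa [U] using hk.symm

theorem even_sub_of_mem_U {k : ℤ} (hk : Even k) {q : ℤ × ℤ} (hq : q ∈ U k) :
    Even (q.1 - q.2) := by
  have hq : q.1 ^ 2 + 3 * q.2 ^ 2 = k := hq
  have hsq : (q.1 - q.2) ^ 2 = k - 2 * (q.2 * (q.1 + q.2)) := by linear_combination hq
  have : Even ((q.1 - q.2) ^ 2) := hsq ▸ hk.sub (even_two_mul _)
  exact (Int.even_pow.1 this).1

theorem rotate_mem_U {k : ℤ} {q : ℤ × ℤ} (hq : q ∈ U k) (hpar : Even (q.1 - q.2)) :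
    rotate q ∈ U k := by
  obtain ⟨a, ha⟩ := hpar
  have h1 : (-q.1 - 3 * q.2) / 2 = -2 * q.2 - a := by omega
  have h2 : (q.1 - q.2) / 2 = a := by omega
  have hx : q.1 = q.2 + 2 * a := by omega
  show ((-q.1 - 3 * q.2) / 2) ^ 2 + 3 * ((q.1 - q.2) / 2) ^ 2 = k
  rw [h1, h2, ← (hq : q.1 ^ 2 + 3 * q.2 ^ 2 = k), hx]
  ring

theorem rotate_iterate_three {q : ℤ × ℤ} (hpar : Even (q.1 - q.2)) : rotate^[3] q = q := by
  obtain ⟨a, ha⟩ := hpar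
  simp only [iterate_succ, iterate_zero, comp_apply, id, rotate]
  exact Prod.ext (by omega) (by omega)

theorem rotate_ne_self {q : ℤ × ℤ} (hq : q ≠ 0) (hpar : Even (q.1 - q.2)) :
    rotate q ≠ q := by
  obtain ⟨a, ha⟩ := hpar
  intro h
  have h1 := congrArg Prod.fst h
  have h2 := congrArg Prod.snd h
  simp only [rotate] at h1 h2
  exact hq (Prod.ext (by rw [Prod.fst_zero]; omega) (by rw [Prod.snd_zero]; omega))

theorem mapsTo_neg_U (k : ℤ) : MapsTo Neg.neg (U k) (U k) := fun _ hq => by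
  simpa [U] using hq

theorem mapsTo_rotate_U {k : ℤ} (hk : Even k) : MapsTo rotate (U k) (U k) :=
  fun _ hq => rotate_mem_U hq (even_sub_of_mem_U hk hq)

theorem stmt6 (k : ℤ) (hk0 : 0 < k) (hk : Even k) : 6 ∣ (U k).ncard := by
  have hpar : ∀ q ∈ U k, Even (q.1 - q.2) := fun q hq => even_sub_of_mem_U hk hq
  have hne : ∀ q ∈ U k, q ≠ 0 := fun q hq h => zero_notMem_U hk0.ne' (h ▸ hq)
  have h2 : 2 ∣ (U k).ncard :=
    (mapsTo_neg_U k).prime_dvd_ncard (U_finite k) (fun q _ => neg_neg q)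
      fun q hq => neg_ne_self.2 (hne q hq)
  have h3 : 3 ∣ (U k).ncard :=
    (mapsTo_rotate_U hk).prime_dvd_ncard (U_finite k)
      (fun q hq => rotate_iterate_three (hpar q hq))
      fun q hq => rotate_ne_self (hne q hq) (hpar q hq)
  exact Nat.Coprime.mul_dvd_of_dvd_of_dvd (by norm_num) h2 h3
end

section
/- For all integers n ≥ 1 and k ≥ 0, one has a₃(3n² + (3^{k+1}+2)n + 3^k) = a₃(n) · a₃(n + 3^k), i.e. |C_{3n²+(3^{k+1}+2)n+3^k}| = |C_n| · |C_{n+3^k}|. -/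
/-!
Let `ζ` be a primitive sixth root of unity, so that `ℤ[ζ]` is the ring of Eisenstein integers,
with norm `N(a + bζ) = a² + ab + b²`. Since `N(1 + 3(y + xζ)) = 3(3x² + 3xy + 3y² + x + 2y) + 1`,
the map `(x, y) ↦ 1 + 3(y + xζ)` identifies `C n` with the elements `z ≡ 1 (mod 3)` of norm
`3n + 1`.

`ℤ[ζ]` is norm-Euclidean, and its six units are pairwise incongruent modulo `3`, so every element
of norm prime to `3` has exactly one associate `≡ 1 (mod 3)`. Hence, for coprime `u, v > 0`, an
element `≡ 1 (mod 3)` of norm `uv` factors uniquely as a product of such elements of norms `u`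
and `v`, and the count of these elements is multiplicative. Now take `u = 3n + 1` and
`v = 3(n + 3^k) + 1`: they are coprime since `v - u = 3^(k+1)`, and
`uv = 3(3n² + (3^(k+1) + 2)n + 3^k) + 1`.
-/

/-- `C n` is the set of characteristic vectors of 3-core partitions of `n`;
`a₃(n) := (C n).ncard` is the number of 3-core partitions of `n`. -/
def C (n : ℤ) : Set (ℤ × ℤ) :=
  {p | 3 * p.1 ^ 2 + 3 * p.1 * p.2 + 3 * p.2 ^ 2 + p.1 + 2 * p.2 = n}

open scoped QuadraticAlgebra

theorem dvd_mul_sub_one {R : Type*} [CommRing R] {c x y : R} (hx : c ∣ x - 1) (hy : c ∣ y - 1) :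
    c ∣ x * y - 1 := by
  rw [show x * y - 1 = (x - 1) * y + (y - 1) by ring]
  exact dvd_add (dvd_mul_of_dvd_left hx y) hy

theorem dvd_sub_one_of_dvd_mul_sub_one {R : Type*} [CommRing R] {c x y : R} (hx : c ∣ x - 1)
    (hxy : c ∣ x * y - 1) : c ∣ y - 1 := by
  rw [show y - 1 = (x * y - 1) - (x - 1) * y by ring]
  exact dvd_sub hxy (dvd_mul_of_dvd_left hx y)

theorem IsCoprime.dvd_of_mul_eq_mul {R : Type*} [CommRing R] {a b z₁ z₂ w₁ w₂ : R}
    (hab : IsCoprime a b) (hz₁ : z₁ ∣ a) (hw₂ : w₂ ∣ b) (h : z₁ * z₂ = w₁ * w₂) : z₁ ∣ w₁ :=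
  ((hab.of_isCoprime_of_dvd_left hz₁).of_isCoprime_of_dvd_right hw₂).dvd_of_dvd_mul_right
    ⟨z₂, h.symm⟩

theorem Int.eq_of_dvd_of_dvd_of_mul_eq_mul {a b u v : ℤ} (hb : 0 ≤ b) (hu : 0 < u) (hv : 0 < v)
    (hau : a ∣ u) (hbv : b ∣ v) (h : a * b = u * v) : a = u ∧ b = v := by
  have := Int.le_of_dvd hu hau
  have := Int.le_of_dvd hv hbv
  constructor <;> nlinarith

theorem Int.abs_two_mul_bmod_le (x : ℤ) {m : ℕ} (hm : 0 < m) : |2 * x.bmod m| ≤ m := by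
  have := Int.le_bmod (x := x) hm
  have := Int.bmod_le (x := x) hm
  rw [abs_le]
  omega

/-- `⟨a, b⟩` stands for `a + bζ`, where `ζ² = ζ - 1`. -/
abbrev EisensteinInt := QuadraticAlgebra ℤ (-1) 1

namespace EisensteinInt

theorem norm_eq (z : EisensteinInt) : z.norm = z.re ^ 2 + z.re * z.im + z.im ^ 2 := by
  rw [QuadraticAlgebra.norm_def]
  ring

theorem four_mul_norm (z : EisensteinInt) :
    4 * z.norm = (2 * z.re + z.im) ^ 2 + 3 * z.im ^ 2 := by
  rw [norm_eq]
  ring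

theorem norm_nonneg (z : EisensteinInt) : 0 ≤ z.norm := by
  nlinarith [four_mul_norm z, sq_nonneg (2 * z.re + z.im), sq_nonneg z.im]

theorem norm_eq_zero_iff {z : EisensteinInt} : z.norm = 0 ↔ z = 0 := by
  refine ⟨fun h => ?_, fun h => h ▸ QuadraticAlgebra.norm_zero⟩
  have hz := four_mul_norm z
  have him : z.im = 0 := by nlinarith [sq_nonneg (2 * z.re + z.im), sq_nonneg z.im]
  have hre : z.re = 0 := by rw [him, h] at hz; nlinarith
  exact QuadraticAlgebra.ext hre him

theorem norm_pos {z : EisensteinInt} (hz : z ≠ 0) : 0 < z.norm :=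
  (norm_nonneg z).lt_of_ne' (mt norm_eq_zero_iff.mp hz)

theorem four_mul_norm_le {z : EisensteinInt} {m : ℤ} (hre : |2 * z.re| ≤ m)
    (him : |2 * z.im| ≤ m) : 4 * z.norm ≤ 3 * m ^ 2 := by
  obtain ⟨hs₁, hs₂⟩ := abs_le.mp hre
  obtain ⟨ht₁, ht₂⟩ := abs_le.mp him
  rw [norm_eq]
  nlinarith [mul_nonneg (sub_nonneg.2 hs₂) (sub_nonneg.2 hs₁),
    mul_nonneg (sub_nonneg.2 ht₂) (sub_nonneg.2 ht₁),
    mul_nonneg (sub_nonneg.2 hs₂) (sub_nonneg.2 ht₂),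
    mul_nonneg (sub_nonneg.2 hs₁) (sub_nonneg.2 ht₁)]

instance : NoZeroDivisors EisensteinInt where
  eq_zero_or_eq_zero_of_mul_eq_zero {x y} h := by
    simpa [norm_eq_zero_iff] using congrArg QuadraticAlgebra.norm h

instance : IsDomain EisensteinInt :=
  NoZeroDivisors.to_isDomain _

/-- The coordinates of `z / w = z * star w / N(w)`, rounded to nearest integers. -/
def roundDiv (z w : EisensteinInt) : EisensteinInt :=
  ⟨(z * star w).re.bdiv w.norm.natAbs, (z * star w).im.bdiv w.norm.natAbs⟩

theorem roundDiv_zero (z : EisensteinInt) : roundDiv z 0 = 0 := by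
  ext <;> simp [roundDiv]

theorem norm_sub_mul_roundDiv_lt (z : EisensteinInt) {w : EisensteinInt} (hw : w ≠ 0) :
    (z - w * roundDiv z w).norm < w.norm := by
  set m := w.norm.natAbs
  have hm : (m : ℤ) = w.norm := Int.natAbs_of_nonneg (norm_nonneg w)
  have hm0 : 0 < m := by have := norm_pos hw; omega
  set p := z * star w
  set r : EisensteinInt := ⟨p.re.bmod m, p.im.bmod m⟩
  have hr : (z - w * roundDiv z w) * star w = r := by
    rw [sub_mul, mul_right_comm, ← QuadraticAlgebra.algebraMap_norm_eq_mul_star, ← hm,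
      ← Algebra.smul_def]
    ext
    · simp only [roundDiv, QuadraticAlgebra.re_sub, QuadraticAlgebra.re_smul, smul_eq_mul, r]
      linarith [Int.bmod_add_bdiv' p.re m]
    · simp only [roundDiv, QuadraticAlgebra.im_sub, QuadraticAlgebra.im_smul, smul_eq_mul, r]
      linarith [Int.bmod_add_bdiv' p.im m]
  have hnorm : (z - w * roundDiv z w).norm * w.norm = r.norm := by
    rw [← hr, map_mul, QuadraticAlgebra.norm_star]
  have hbound : 4 * r.norm ≤ 3 * (m : ℤ) ^ 2 :=
    four_mul_norm_le (Int.abs_two_mul_bmod_le _ hm0) (Int.abs_two_mul_bmod_le _ hm0)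
  nlinarith [norm_nonneg (z - w * roundDiv z w)]

instance : EuclideanDomain EisensteinInt where
  quotient := roundDiv
  quotient_zero := roundDiv_zero
  remainder z w := z - w * roundDiv z w
  quotient_mul_add_remainder_eq z w := add_sub_cancel _ _
  r := InvImage (· < ·) fun z => z.norm.natAbs
  r_wellFounded := (measure fun z : EisensteinInt => z.norm.natAbs).wf
  remainder_lt z w hw := by
    have := norm_sub_mul_roundDiv_lt z hw
    have := norm_nonneg (z - w * roundDiv z w)
    show Int.natAbs _ < Int.natAbs _
    omega
  mul_left_not_lt z w hw := by
    have := norm_pos hw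
    show ¬ Int.natAbs _ < Int.natAbs _
    rw [map_mul, Int.natAbs_mul, not_lt]
    exact Nat.le_mul_of_pos_right _ (by omega)

theorem norm_eq_one_of_isUnit {u : EisensteinInt} (hu : IsUnit u) : u.norm = 1 := by
  rcases Int.isUnit_iff.mp (QuadraticAlgebra.isUnit_iff_norm_isUnit.mp hu) with h | h
  · exact h
  · linarith [norm_nonneg u]

theorem isUnit_of_norm_eq_one {u : EisensteinInt} (hu : u.norm = 1) : IsUnit u :=
  QuadraticAlgebra.isUnit_iff_norm_isUnit.mpr (by rw [hu]; exact isUnit_one)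

theorem three_dvd_iff {z : EisensteinInt} : (3 : EisensteinInt) ∣ z ↔ 3 ∣ z.re ∧ 3 ∣ z.im :=
  QuadraticAlgebra.algebraMap_dvd_iff (r := 3)

theorem eq_one_of_isUnit_of_three_dvd_sub_one {u : EisensteinInt} (hu : IsUnit u)
    (h : 3 ∣ u - 1) : u = 1 := by
  have h4 := four_mul_norm u
  rw [norm_eq_one_of_isUnit hu] at h4
  obtain ⟨hre, him⟩ := three_dvd_iff.mp h
  simp only [QuadraticAlgebra.re_sub, QuadraticAlgebra.im_sub, QuadraticAlgebra.re_one,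
    QuadraticAlgebra.im_one, sub_zero] at hre him
  have him1 : |u.im| ≤ 1 := sq_le_one_iff_abs_le_one _ |>.mp (by nlinarith)
  have him0 : u.im = 0 := by rw [abs_le] at him1; omega
  have hre1 : |u.re| ≤ 1 := sq_le_one_iff_abs_le_one _ |>.mp (by rw [him0] at h4; nlinarith)
  have hre0 : u.re = 1 := by rw [abs_le] at hre1; omega
  exact QuadraticAlgebra.ext hre0 him0

theorem exists_unit_three_dvd_mul_sub_one {z : EisensteinInt} (hz : ¬ 3 ∣ z.norm) :
    ∃ e : EisensteinIntˣ, 3 ∣ e * z - 1 := by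
  -- `N(z) ≡ (re z - im z)² (mod 3)`
  have hdiff : ¬ 3 ∣ z.re - z.im := by
    rintro ⟨c, hc⟩
    refine hz ⟨3 * c ^ 2 + z.re * z.im, ?_⟩
    rw [norm_eq]
    linear_combination (z.re - z.im + 3 * c) * hc
  have unit_mul (c d : ℤ) (hcd : c ^ 2 + c * d + d ^ 2 = 1)
      (hre : 3 ∣ c * z.re - d * z.im - 1) (him : 3 ∣ c * z.im + d * z.re + d * z.im) :
      ∃ e : EisensteinIntˣ, 3 ∣ e * z - 1 := by
    refine ⟨(isUnit_of_norm_eq_one (u := ⟨c, d⟩) (by rw [norm_eq]; exact hcd)).unit,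
      three_dvd_iff.mpr ⟨?_, ?_⟩⟩
    · convert hre using 1
      simp only [IsUnit.unit_spec, QuadraticAlgebra.re_sub, QuadraticAlgebra.re_mul,
        QuadraticAlgebra.re_one]
      ring
    · convert him using 1
      simp only [IsUnit.unit_spec, QuadraticAlgebra.im_sub, QuadraticAlgebra.im_mul,
        QuadraticAlgebra.im_one]
      ring
  have hre : z.re % 3 = 0 ∨ z.re % 3 = 1 ∨ z.re % 3 = 2 := by omega
  have him : z.im % 3 = 0 ∨ z.im % 3 = 1 ∨ z.im % 3 = 2 := by omega
  rcases hre with hre | hre | hre <;> rcases him with him | him | him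
  all_goals first
    | (exfalso; omega)
    | exact unit_mul 1 0 rfl (by omega) (by omega)
    | exact unit_mul (-1) 0 rfl (by omega) (by omega)
    | exact unit_mul 0 1 rfl (by omega) (by omega)
    | exact unit_mul 0 (-1) rfl (by omega) (by omega)
    | exact unit_mul 1 (-1) rfl (by omega) (by omega)
    | exact unit_mul (-1) 1 rfl (by omega) (by omega)

theorem norm_one_add_three_mul (w : EisensteinInt) :
    (1 + 3 * w).norm =
      3 * (3 * w.im ^ 2 + 3 * w.im * w.re + 3 * w.re ^ 2 + w.im + 2 * w.re) + 1 := by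
  rw [norm_eq]
  simp only [QuadraticAlgebra.re_add, QuadraticAlgebra.re_one, QuadraticAlgebra.re_mul,
    QuadraticAlgebra.re_ofNat, QuadraticAlgebra.im_ofNat, QuadraticAlgebra.im_add,
    QuadraticAlgebra.im_one, QuadraticAlgebra.im_mul]
  ring

theorem not_three_dvd_norm {z : EisensteinInt} (hz : 3 ∣ z - 1) : ¬ 3 ∣ z.norm := by
  obtain ⟨w, hw⟩ := hz
  rw [eq_add_of_sub_eq' hw, norm_one_add_three_mul]
  omega

theorem eq_of_associated_of_three_dvd_sub_one {z w : EisensteinInt} (h : Associated z w)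
    (hz : 3 ∣ z - 1) (hw : 3 ∣ w - 1) : z = w := by
  obtain ⟨e, rfl⟩ := h
  rw [eq_one_of_isUnit_of_three_dvd_sub_one e.isUnit (dvd_sub_one_of_dvd_mul_sub_one hz hw),
    mul_one]

theorem dvd_algebraMap_norm (z : EisensteinInt) : z ∣ algebraMap ℤ EisensteinInt z.norm :=
  ⟨star z, QuadraticAlgebra.algebraMap_norm_eq_mul_star z⟩

theorem exists_mul_eq_of_norm_eq_mul {u v : ℤ} (hu : 0 < u) (hv : 0 < v) (huv : IsCoprime u v)
    {z : EisensteinInt} (hz : z.norm = u * v) :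
    ∃ z₁ z₂ : EisensteinInt, z₁ * z₂ = z ∧ z₁.norm = u ∧ z₂.norm = v := by
  have hdvd : z ∣ algebraMap ℤ EisensteinInt u * algebraMap ℤ EisensteinInt v := by
    simpa [hz] using dvd_algebraMap_norm z
  obtain ⟨z₁, z₂, h₁, h₂, rfl⟩ := exists_dvd_and_dvd_of_dvd_mul hdvd
  have hn₁ : z₁.norm ∣ u ^ 2 := by simpa using map_dvd QuadraticAlgebra.norm h₁
  have hn₂ : z₂.norm ∣ v ^ 2 := by simpa using map_dvd QuadraticAlgebra.norm h₂
  rw [map_mul] at hz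
  have hu₁ : z₁.norm ∣ u :=
    (huv.pow_left.of_isCoprime_of_dvd_left hn₁).dvd_of_dvd_mul_right (Dvd.intro _ hz)
  have hv₂ : z₂.norm ∣ v :=
    (huv.symm.pow_left.of_isCoprime_of_dvd_left hn₂).dvd_of_dvd_mul_left (Dvd.intro_left _ hz)
  obtain ⟨h₁, h₂⟩ := Int.eq_of_dvd_of_dvd_of_mul_eq_mul (norm_nonneg _) hu hv hu₁ hv₂ hz
  exact ⟨z₁, z₂, rfl, h₁, h₂⟩

def primaryOfNorm (m : ℤ) : Set EisensteinInt := {z | z.norm = m ∧ 3 ∣ z - 1}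

theorem mul_mem_primaryOfNorm {u v : ℤ} {z w : EisensteinInt} (hz : z ∈ primaryOfNorm u)
    (hw : w ∈ primaryOfNorm v) : z * w ∈ primaryOfNorm (u * v) :=
  ⟨by rw [map_mul, hz.1, hw.1], dvd_mul_sub_one hz.2 hw.2⟩

theorem image_mul_primaryOfNorm {u v : ℤ} (hu : 0 < u) (hv : 0 < v) (huv : IsCoprime u v) :
    (fun p => p.1 * p.2) '' (primaryOfNorm u ×ˢ primaryOfNorm v) = primaryOfNorm (u * v) := by
  refine subset_antisymm (Set.image_subset_iff.mpr fun p hp => mul_mem_primaryOfNorm hp.1 hp.2)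
    fun z ⟨hz, hz3⟩ => ?_
  obtain ⟨z₁, z₂, rfl, h₁, h₂⟩ := exists_mul_eq_of_norm_eq_mul hu hv huv hz
  have hz₁ : ¬ 3 ∣ z₁.norm := fun h =>
    not_three_dvd_norm hz3 (by rw [map_mul]; exact h.mul_right _)
  obtain ⟨e, he⟩ := exists_unit_three_dvd_mul_sub_one hz₁
  have norm_unit_mul (c : EisensteinIntˣ) (x : EisensteinInt) : (c * x).norm = x.norm := by
    rw [map_mul, norm_eq_one_of_isUnit c.isUnit, one_mul]
  have hprod : (e * z₁) * (↑e⁻¹ * z₂) = z₁ * z₂ := by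
    rw [mul_mul_mul_comm, Units.mul_inv, one_mul]
  refine ⟨(e * z₁, ↑e⁻¹ * z₂), ⟨⟨(norm_unit_mul _ _).trans h₁, he⟩,
    ⟨(norm_unit_mul _ _).trans h₂, ?_⟩⟩, hprod⟩
  exact dvd_sub_one_of_dvd_mul_sub_one he (hprod ▸ hz3)

theorem injOn_mul_primaryOfNorm {u v : ℤ} (huv : IsCoprime u v) :
    Set.InjOn (fun p => p.1 * p.2) (primaryOfNorm u ×ˢ primaryOfNorm v) := by
  rintro ⟨z₁, z₂⟩ ⟨⟨hz₁, hz₁3⟩, ⟨hz₂, -⟩⟩ ⟨w₁, w₂⟩ ⟨⟨hw₁, hw₁3⟩, ⟨hw₂, -⟩⟩ (h : z₁ * z₂ = w₁ * w₂)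
  have hdvd {x : EisensteinInt} {m : ℤ} (hx : x.norm = m) : x ∣ algebraMap ℤ _ m :=
    hx ▸ dvd_algebraMap_norm x
  have huv' := huv.map (algebraMap ℤ EisensteinInt)
  have h₁ : z₁ = w₁ := eq_of_associated_of_three_dvd_sub_one (associated_of_dvd_dvd
    (huv'.dvd_of_mul_eq_mul (hdvd hz₁) (hdvd hw₂) h)
    (huv'.dvd_of_mul_eq_mul (hdvd hw₁) (hdvd hz₂) h.symm)) hz₁3 hw₁3
  have hz₁0 : z₁ ≠ 0 := fun h0 => not_three_dvd_norm hz₁3 (by simp [h0])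
  subst h₁
  rw [mul_left_cancel₀ hz₁0 h]

theorem ncard_primaryOfNorm_mul {u v : ℤ} (hu : 0 < u) (hv : 0 < v) (huv : IsCoprime u v) :
    (primaryOfNorm (u * v)).ncard = (primaryOfNorm u).ncard * (primaryOfNorm v).ncard := by
  rw [← Set.ncard_prod, ← image_mul_primaryOfNorm hu hv huv,
    (injOn_mul_primaryOfNorm huv).ncard_image]

theorem primaryOfNorm_three_mul_add_one (n : ℤ) :
    primaryOfNorm (3 * n + 1) = (fun p : ℤ × ℤ => 1 + 3 * ⟨p.2, p.1⟩) '' C n := by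
  ext z
  constructor
  · rintro ⟨hz, w, hw⟩
    refine ⟨(w.im, w.re), ?_, show 1 + 3 * w = z by rw [← hw]; ring⟩
    rw [eq_add_of_sub_eq' hw, norm_one_add_three_mul] at hz
    simp only [C, Set.mem_ofPred_eq]
    linarith
  · rintro ⟨p, hp, rfl⟩
    refine ⟨?_, by simp⟩
    rw [norm_one_add_three_mul]
    simp only [C, Set.mem_ofPred_eq] at hp
    rw [← hp]

theorem ncard_C (n : ℤ) : (C n).ncard = (primaryOfNorm (3 * n + 1)).ncard := by
  rw [primaryOfNorm_three_mul_add_one, Set.ncard_image_of_injective]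
  intro p q h
  obtain ⟨h₂, h₁⟩ := QuadraticAlgebra.mk.inj (mul_left_cancel₀ (by norm_num) (add_left_cancel h))
  exact Prod.ext h₁ h₂

end EisensteinInt

theorem stmt15_general (n k : ℕ) :
    (C ((3 * n ^ 2 + (3 ^ (k + 1) + 2) * n + 3 ^ k : ℕ) : ℤ)).ncard =
      (C (n : ℤ)).ncard * (C ((n + 3 ^ k : ℕ) : ℤ)).ncard := by
  have hcop : IsCoprime (3 * (n : ℤ) + 1) (3 * ((n + 3 ^ k : ℕ) : ℤ) + 1) := by
    rw [show 3 * ((n + 3 ^ k : ℕ) : ℤ) + 1 = 3 ^ (k + 1) + (3 * n + 1) * 1 by push_cast; ring]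
    exact (IsCoprime.pow_right ⟨1, -(n : ℤ), by ring⟩).add_mul_left_right 1
  simp only [EisensteinInt.ncard_C]
  rw [← EisensteinInt.ncard_primaryOfNorm_mul (by positivity) (by positivity) hcop]
  congr 2
  push_cast
  ring

theorem stmt15 (n k : ℕ) (hn : 1 ≤ n) :
    (C ((3 * n ^ 2 + (3 ^ (k + 1) + 2) * n + 3 ^ k : ℕ) : ℤ)).ncard =
      (C (n : ℤ)).ncard * (C ((n + 3 ^ k : ℕ) : ℤ)).ncard :=
  stmt15_general n k
end

section
/- Let N be a nonnegative integer with no 3-core partition, i.e. C_N = ∅. Then either (a) there exists an integer k ≥ 1 with N = 4k−1 (equivalently 3N+1 = 2(6k−1)), or (b) there exist integers k ≥ 1, m ≥ 1 and an odd prime p with p ≡ 2 (mod 3) such that 6k−1 = p^e for some odd exponent e ≥ 1, m ≢ 2k−1 (mod p), and N = (6k−1)m + 4k−1. -/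
/-!
Since `(3x)² + 3x(3y + 1) + (3y + 1)² = 3(3x² + 3xy + 3y² + x + 2y) + 1`, and any representation
`a² + ab + b² = 3N + 1` can be brought to the shape `(3x, 3y + 1)` by a symmetry of the form,
`C N = ∅` says that `3N + 1` is not a Löschian number (a value of `a² + ab + b²`).
Löschian numbers form a multiplicative monoid containing every square, `3`, and every prime
`p ≡ 1 (mod 3)` (Thue's lemma applied to a primitive cube root of unity mod `p`).
Hence some prime `p ≡ 2 (mod 3)` divides `3N + 1` to an odd power `e`, and `p` can be taken odd:
the odd part of `3N + 1` is itself not Löschian, being `≡ 2 (mod 3)` when the power of `2` is odd.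
Writing `3N + 1 = pᵉ t` with `p ∤ t`, both `pᵉ` and `t` are `≡ 2 (mod 3)`, so `pᵉ = 6k - 1` and
either `t = 2`, which is case (a), or `t = 3m + 2` with `p ∤ 3m + 2`, which is case (b).
-/

def loeschian : Submonoid ℕ where
  carrier := {n | ∃ a b : ℤ, a ^ 2 + a * b + b ^ 2 = n}
  one_mem' := ⟨1, 0, by norm_num⟩
  mul_mem' := by
    rintro m n ⟨a, b, hm⟩ ⟨c, d, hn⟩
    refine ⟨a * c - b * d, a * d + b * c + b * d, ?_⟩
    push_cast
    rw [← hm, ← hn]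
    ring

lemma sq_mem_loeschian (m : ℕ) : m ^ 2 ∈ loeschian := ⟨m, 0, by push_cast; ring⟩

lemma mod_three_ne_two_of_mem_loeschian {n : ℕ} (h : n ∈ loeschian) : n % 3 ≠ 2 := by
  obtain ⟨a, b, hab⟩ := h
  intro hn
  have hform : ∀ u v : ZMod 3, u ^ 2 + u * v + v ^ 2 ≠ 2 := by decide
  apply hform a b
  have := congrArg (Int.cast : ℤ → ZMod 3) hab
  push_cast at this
  rw [this, ← ZMod.natCast_mod, hn]
  rfl

lemma ZMod.exists_sq_add_self_add_one_eq_zero {p : ℕ} [Fact p.Prime] (hp : p % 3 = 1) :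
    ∃ x : ZMod p, x ^ 2 + x + 1 = 0 := by
  have h3 : 3 ∣ Fintype.card (ZMod p)ˣ := by rw [ZMod.card_units]; omega
  have : Fact (Nat.Prime 3) := ⟨Nat.prime_three⟩
  obtain ⟨g, hg⟩ := exists_prime_orderOf_dvd_card 3 h3
  have hg3 : (g : ZMod p) ^ 3 = 1 := by
    rw [← Units.val_pow_eq_pow_val, ← hg, pow_orderOf_eq_one, Units.val_one]
  have hg1 : (g : ZMod p) - 1 ≠ 0 := by
    rw [sub_ne_zero, Ne, Units.val_eq_one]
    rintro rfl
    simp at hg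
  refine ⟨g, (mul_eq_zero.mp ?_).resolve_left hg1⟩
  linear_combination hg3

/-- Thue's lemma. -/
lemma ZMod.exists_abs_le_sqrt_intCast_eq_mul (n : ℕ) [NeZero n] (x : ZMod n) :
    ∃ a b : ℤ, (a ≠ 0 ∨ b ≠ 0) ∧ |a| ≤ n.sqrt ∧ |b| ≤ n.sqrt ∧ (a : ZMod n) = x * b := by
  set s := n.sqrt
  have hcard : Fintype.card (ZMod n) < Fintype.card (Fin (s + 1) × Fin (s + 1)) := by
    rw [ZMod.card, Fintype.card_prod, Fintype.card_fin, ← sq]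
    exact Nat.lt_succ_sqrt' n
  obtain ⟨u, v, huv, hfeq⟩ := Fintype.exists_ne_map_eq_of_card_lt
    (fun w : Fin (s + 1) × Fin (s + 1) => (w.1 : ZMod n) - x * (w.2 : ZMod n)) hcard
  have hu1 := u.1.is_lt; have hu2 := u.2.is_lt; have hv1 := v.1.is_lt; have hv2 := v.2.is_lt
  refine ⟨(u.1 : ℤ) - v.1, (u.2 : ℤ) - v.2, ?_, ?_, ?_, ?_⟩
  · by_contra! h
    exact huv (Prod.ext (Fin.ext (by omega)) (Fin.ext (by omega)))
  · rw [abs_le]; omega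
  · rw [abs_le]; omega
  · push_cast
    linear_combination (hfeq : ((u.1 : ℕ) : ZMod n) - x * (u.2 : ℕ) = (v.1 : ℕ) - x * (v.2 : ℕ))

lemma sq_add_mul_add_sq_pos {a b : ℤ} (h : a ≠ 0 ∨ b ≠ 0) : 0 < a ^ 2 + a * b + b ^ 2 := by
  rcases h with h | h
  · nlinarith [sq_pos_of_ne_zero h, sq_nonneg (a + 2 * b)]
  · nlinarith [sq_pos_of_ne_zero h, sq_nonneg (2 * a + b)]

lemma sq_add_mul_add_sq_le {a b s : ℤ} (ha : |a| ≤ s) (hb : |b| ≤ s) :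
    a ^ 2 + a * b + b ^ 2 ≤ 3 * s ^ 2 := by
  have hab : a * b ≤ s ^ 2 :=
    calc a * b ≤ |a| * |b| := by rw [← abs_mul]; exact le_abs_self _
      _ ≤ s ^ 2 := by rw [sq]; exact mul_le_mul ha hb (abs_nonneg _) ((abs_nonneg _).trans ha)
  nlinarith [sq_le_sq' (abs_le.mp ha).1 (abs_le.mp ha).2,
    sq_le_sq' (abs_le.mp hb).1 (abs_le.mp hb).2]

lemma Nat.Prime.sqrt_sq_lt {p : ℕ} (hp : p.Prime) : p.sqrt ^ 2 < p := by
  refine (Nat.sqrt_le' p).lt_of_ne fun h => ?_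
  rw [← h, sq, Nat.prime_mul_iff, or_self] at hp
  exact Nat.not_prime_one (hp.2 ▸ hp.1)

lemma prime_mem_loeschian_of_mod_three_eq_one {p : ℕ} (hp : p.Prime) (hp1 : p % 3 = 1) :
    p ∈ loeschian := by
  have : Fact p.Prime := ⟨hp⟩
  obtain ⟨x, hx⟩ := ZMod.exists_sq_add_self_add_one_eq_zero hp1
  obtain ⟨a, b, hne, ha, hb, hab⟩ := ZMod.exists_abs_le_sqrt_intCast_eq_mul p x
  obtain ⟨c, hc⟩ : (p : ℤ) ∣ a ^ 2 + a * b + b ^ 2 := by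
    rw [← ZMod.intCast_zmod_eq_zero_iff_dvd]
    push_cast
    rw [hab]
    linear_combination (b : ZMod p) ^ 2 * hx
  have hpos := sq_add_mul_add_sq_pos hne
  have hlt : a ^ 2 + a * b + b ^ 2 < 3 * p := by
    have := sq_add_mul_add_sq_le ha hb
    have : ((p.sqrt ^ 2 : ℕ) : ℤ) < p := by exact_mod_cast hp.sqrt_sq_lt
    push_cast at this
    linarith
  have hp0 : (0 : ℤ) < p := by exact_mod_cast hp.pos
  obtain rfl | rfl : c = 1 ∨ c = 2 := by
    have : 0 < c := by nlinarith
    have : c < 3 := by nlinarith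
    omega
  · exact ⟨a, b, by rw [hc, mul_one]⟩
  · exact absurd (mod_three_ne_two_of_mem_loeschian (n := p * 2) ⟨a, b, by push_cast; exact hc⟩)
      (by omega)

lemma prime_mem_loeschian {p : ℕ} (hp : p.Prime) (hp2 : p % 3 ≠ 2) : p ∈ loeschian := by
  obtain rfl | hp1 : p = 3 ∨ p % 3 = 1 := by
    have := hp.eq_one_or_self_of_dvd 3
    omega
  · exact ⟨1, 1, by norm_num⟩
  · exact prime_mem_loeschian_of_mod_three_eq_one hp hp1

lemma mem_loeschian_of_even_factorization {n : ℕ} (hn : n ≠ 0)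
    (h : ∀ p, p.Prime → p % 3 = 2 → Even (n.factorization p)) : n ∈ loeschian := by
  rw [← Nat.prod_factorization_pow_eq_self hn]
  refine SubmonoidClass.finsuppProd_mem _ _ _ fun p hp => ?_
  have hp : p.Prime := Nat.prime_of_mem_primeFactors (Finsupp.mem_support_iff.mpr hp)
  by_cases hp2 : p % 3 = 2
  · obtain ⟨j, hj⟩ := h p hp hp2
    rw [hj, ← two_mul, pow_mul]
    exact pow_mem (sq_mem_loeschian p) j
  · exact pow_mem (prime_mem_loeschian hp hp2) _

lemma exists_prime_mod_three_eq_two_odd_factorization {n : ℕ} (hn : n ≠ 0)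
    (h : n ∉ loeschian) : ∃ p, p.Prime ∧ p % 3 = 2 ∧ Odd (n.factorization p) := by
  contrapose! h
  exact mem_loeschian_of_even_factorization hn fun p hp hp2 => Nat.not_odd_iff_even.mp (h p hp hp2)

lemma pow_mod_three_of_odd {p e : ℕ} (hp : p % 3 = 2) (he : Odd e) : p ^ e % 3 = 2 := by
  obtain ⟨j, rfl⟩ := he
  rw [Nat.pow_mod, hp, pow_succ, pow_mul, Nat.mul_mod, Nat.pow_mod]
  norm_num

lemma exists_odd_prime_mod_three_eq_two_odd_factorization {n : ℕ} (hn : n % 3 = 1)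
    (h : n ∉ loeschian) : ∃ p, p.Prime ∧ p ≠ 2 ∧ p % 3 = 2 ∧ Odd (n.factorization p) := by
  have hn0 : n ≠ 0 := by omega
  have hnt := Nat.ordProj_mul_ordCompl_eq_self n 2
  have hodd : ordCompl[2] n ∉ loeschian := by
    intro ht
    rcases Nat.even_or_odd (n.factorization 2) with ⟨j, hj⟩ | he
    · have h2 : 2 ^ n.factorization 2 ∈ loeschian := by
        rw [hj, ← two_mul, pow_mul]
        exact pow_mem (sq_mem_loeschian 2) j
      exact h (hnt ▸ mul_mem h2 ht)
    · refine mod_three_ne_two_of_mem_loeschian ht ?_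
      have := Nat.mul_mod (2 ^ n.factorization 2) (ordCompl[2] n) 3
      rw [hnt, pow_mod_three_of_odd rfl he, hn] at this
      omega
  obtain ⟨p, hp, hp3, hpodd⟩ :=
    exists_prime_mod_three_eq_two_odd_factorization (Nat.ordCompl_pos 2 hn0).ne' hodd
  rw [Nat.factorization_ordCompl] at hpodd
  obtain rfl | hp2 := eq_or_ne p 2
  · simp at hpodd
  · exact ⟨p, hp, hp2, hp3, by rwa [Finsupp.erase_ne hp2] at hpodd⟩

lemma C_nonempty_of_three_dvd {n a b : ℤ} (h : a ^ 2 + a * b + b ^ 2 = 3 * n + 1) (ha : 3 ∣ a) :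
    (C n).Nonempty := by
  obtain ⟨x, rfl⟩ := ha
  obtain ⟨y, rfl | rfl | rfl⟩ : ∃ y, b = 3 * y ∨ b = 3 * y + 1 ∨ b = 3 * y + 2 :=
    ⟨b / 3, by omega⟩
  · exact absurd ⟨3 * x ^ 2 + 3 * x * y + 3 * y ^ 2 - n, by linear_combination -h⟩
      (by norm_num : ¬ (3 : ℤ) ∣ 1)
  · exact ⟨(x, y), by simp only [C, Set.mem_ofPred_eq]; linarith⟩
  -- replace `(a, b)` by `(-a, -b)`
  · exact ⟨(-x, -y - 1), by simp only [C, Set.mem_ofPred_eq]; linarith⟩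

lemma C_nonempty_of_mem_loeschian {N : ℕ} (h : 3 * N + 1 ∈ loeschian) : (C N).Nonempty := by
  obtain ⟨a, b, hab⟩ := h
  push_cast at hab
  have hres : ∀ u v : ZMod 3, u ^ 2 + u * v + v ^ 2 = 1 → u = 0 ∨ v = 0 ∨ u + v = 0 := by decide
  have hab3 := congrArg (Int.cast : ℤ → ZMod 3) hab
  push_cast at hab3
  rw [show (3 : ZMod 3) = 0 from rfl, zero_mul, zero_add] at hab3
  have hdvd (z : ℤ) (hz : (z : ZMod 3) = 0) : 3 ∣ z := (ZMod.intCast_zmod_eq_zero_iff_dvd z 3).mp hz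
  -- the form is invariant under `(a, b) ↦ (b, a)` and `(a, b) ↦ (a + b, -b)`
  rcases hres a b hab3 with ha | hb | hab'
  · exact C_nonempty_of_three_dvd hab (hdvd a ha)
  · exact C_nonempty_of_three_dvd (a := b) (b := a) (by linear_combination hab) (hdvd b hb)
  · exact C_nonempty_of_three_dvd (b := -b) (by linear_combination hab)
      (hdvd (a + b) (by push_cast; exact hab'))

lemma not_modEq_two_mul_sub_one_of_dvd {p k m : ℕ} (hk : 1 ≤ k) (hpk : p ∣ 6 * k - 1) (hpm : ¬ p ∣ 3 * m + 2) :
    ¬ m ≡ 2 * k - 1 [MOD p] := by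
  intro h
  have h' : 3 * m + 2 ≡ 6 * k - 1 [MOD p] := by
    convert (h.mul_left 3).add_right 2 using 1
    omega
  exact hpm ((h'.dvd_iff dvd_rfl).mpr hpk)

lemma exists_of_prime_pow_mul_eq {N p e t : ℕ} (hp : p.Prime) (hp2 : p ≠ 2) (hp3 : p % 3 = 2)
    (he : Odd e) (hpt : ¬ p ∣ t) (hN : p ^ e * t = 3 * N + 1) :
    (∃ k : ℕ, 1 ≤ k ∧ N = 4 * k - 1) ∨
    (∃ k m p e : ℕ, 1 ≤ k ∧ 1 ≤ m ∧ p.Prime ∧ p ≠ 2 ∧ p % 3 = 2 ∧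
      1 ≤ e ∧ Odd e ∧ 6 * k - 1 = p ^ e ∧ ¬ m ≡ 2 * k - 1 [MOD p] ∧
      N = (6 * k - 1) * m + (4 * k - 1)) := by
  have hQ3 := pow_mod_three_of_odd hp3 he
  have hQ2 := Nat.odd_iff.mp ((hp.odd_of_ne_two hp2).pow (n := e))
  obtain ⟨k, hk, hkQ⟩ : ∃ k, 1 ≤ k ∧ 6 * k - 1 = p ^ e := ⟨(p ^ e + 1) / 6, by omega, by omega⟩
  have ht3 : t % 3 = 2 := by
    have := Nat.mul_mod (p ^ e) t 3
    rw [hN, hQ3] at this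
    omega
  obtain rfl | ⟨m, hm, rfl⟩ : t = 2 ∨ ∃ m, 1 ≤ m ∧ t = 3 * m + 2 := by
    rcases eq_or_ne t 2 with ht | ht
    exacts [.inl ht, .inr ⟨t / 3, by omega, by omega⟩]
  · exact .inl ⟨k, hk, by omega⟩
  · refine .inr ⟨k, m, p, e, hk, hm, hp, hp2, hp3, he.pos, he, hkQ,
      not_modEq_two_mul_sub_one_of_dvd hk (hkQ ▸ dvd_pow_self p he.pos.ne') hpt, ?_⟩
    have : 3 * N + 1 = 3 * (p ^ e * m) + 2 * p ^ e := by rw [← hN]; ring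
    rw [hkQ]
    omega

theorem stmt19 (N : ℕ) (h : C (N : ℤ) = ∅) :
    (∃ k : ℕ, 1 ≤ k ∧ N = 4 * k - 1) ∨
    (∃ k m p e : ℕ, 1 ≤ k ∧ 1 ≤ m ∧ p.Prime ∧ p ≠ 2 ∧ p % 3 = 2 ∧
      1 ≤ e ∧ Odd e ∧ 6 * k - 1 = p ^ e ∧ ¬ m ≡ 2 * k - 1 [MOD p] ∧
      N = (6 * k - 1) * m + (4 * k - 1)) := by
  have hN : 3 * N + 1 ∉ loeschian := fun hN => (C_nonempty_of_mem_loeschian hN).ne_empty h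
  obtain ⟨p, hp, hp2, hp3, he⟩ :=
    exists_odd_prime_mod_three_eq_two_odd_factorization (by omega) hN
  exact exists_of_prime_pow_mul_eq hp hp2 hp3 he (Nat.not_dvd_ordCompl hp (by omega))
    (Nat.ordProj_mul_ordCompl_eq_self _ _)
end
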